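/- Assume V is continuously differentiable on a neighborhood of [0,T] × S_d, satisfies ℒ[V](t,m) = 0 for all (t,m) ∈ [0,T] × S_d and V(T,m) = ∑_{i=1}^d m_i g^i(m) for all m ∈ S_d, and assume each map z ↦ H^i(t,m,z) is Lipschitz with a common constant C > 0. If φ is continuously differentiable on a neighborhood of [0,T] × S_d and satisfies sup_{(t,m) ∈ [0,T]×S_d} |V(t,m) − φ(t,m)| + sup_{(t,m) ∈ [0,T]×S_d} |∂_t V(t,m) − ∂_t φ(t,m)| + sup_{(t,m) ∈ [0,T]×S_d} ‖∇_m V(t,m) − ∇_m φ(t,m)‖ < ε, then the DGM L∞-loss satisfies L(φ) ≤ (√2 · C · d^{3/2} + 2) ε. -/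

import Mathlib

open scoped BigOperators RealInnerProductSpace
noncomputable section

/-- The (d-1)-dimensional probability simplex in ℝ^d. -/
def simplexSet (d : ℕ) : Set (EuclideanSpace ℝ (Fin d)) :=
  {m | (∀ i, 0 ≤ m i) ∧ ∑ i, m i = 1}

/-- The standard basis vector `e_i` of ℝ^d. -/
def eVec (d : ℕ) (i : Fin d) : EuclideanSpace ℝ (Fin d) := EuclideanSpace.single i 1

/-- `D^i h (t,m)`: the vector of directional derivatives of `h(t,·)` at `m` in the
directions `e_j - e_i`, `j = 1,…,d`. -/
def Dvec (d : ℕ) (h : ℝ → EuclideanSpace ℝ (Fin d) → ℝ) (i : Fin d) (t : ℝ)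
    (m : EuclideanSpace ℝ (Fin d)) : EuclideanSpace ℝ (Fin d) :=
  (EuclideanSpace.equiv (Fin d) ℝ).symm fun j => fderiv ℝ (h t) m (eVec d j - eVec d i)

/-- `h` is continuously differentiable on an open neighborhood of `[0,T] × S_d`. -/
def C1OnNbhd (d : ℕ) (T : ℝ) (h : ℝ → EuclideanSpace ℝ (Fin d) → ℝ) : Prop :=
  ∃ U : Set (ℝ × EuclideanSpace ℝ (Fin d)), IsOpen U ∧
    Set.Icc (0:ℝ) T ×ˢ simplexSet d ⊆ U ∧ ContDiffOn ℝ 1 (fun p => h p.1 p.2) U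

/-- The HJB operator `ℒ[φ](t,m) = -∂_t φ(t,m) + ∑_i m_i H^i(t,m,D^iφ(t,m))`. -/
def HJBop (d : ℕ) (H : Fin d → ℝ → EuclideanSpace ℝ (Fin d) → EuclideanSpace ℝ (Fin d) → ℝ)
    (φ : ℝ → EuclideanSpace ℝ (Fin d) → ℝ) (t : ℝ) (m : EuclideanSpace ℝ (Fin d)) : ℝ :=
  -(deriv (fun s => φ s m) t) + ∑ i, m i * H i t m (Dvec d φ i t m)

/-- The DGM L∞-loss
`L(φ) = max_{[0,T]×S_d} |ℒ[φ]| + max_{S_d} |φ(T,·) - ∑_i m_i g^i(m)|`. -/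
def DGMloss (d : ℕ) (T : ℝ)
    (H : Fin d → ℝ → EuclideanSpace ℝ (Fin d) → EuclideanSpace ℝ (Fin d) → ℝ)
    (g : Fin d → EuclideanSpace ℝ (Fin d) → ℝ)
    (φ : ℝ → EuclideanSpace ℝ (Fin d) → ℝ) : ℝ :=
  sSup ((fun p : ℝ × EuclideanSpace ℝ (Fin d) => |HJBop d H φ p.1 p.2|) ''
      (Set.Icc (0:ℝ) T ×ˢ simplexSet d)) +
  sSup ((fun m => |φ T m - ∑ i, m i * g i m|) '' simplexSet d)

lemma simplex_isCompact (d : ℕ) : IsCompact (simplexSet d) := by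
  have h1 : IsClosed {m : EuclideanSpace ℝ (Fin d) | ∀ i, 0 ≤ m i} := by
    have : {m : EuclideanSpace ℝ (Fin d) | ∀ i, 0 ≤ m i} = ⋂ i, {m | 0 ≤ m i} := by
      ext m; simp
    rw [this]
    exact isClosed_iInter fun i =>
      isClosed_le continuous_const (EuclideanSpace.proj i).continuous
  have h2 : IsClosed {m : EuclideanSpace ℝ (Fin d) | ∑ i, m i = 1} :=
    isClosed_eq (continuous_finset_sum _ fun i _ => (EuclideanSpace.proj i).continuous)
      continuous_const
  have hclosed : IsClosed (simplexSet d) := h1.inter h2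
  have hbdd : Bornology.IsBounded (simplexSet d) := by
    apply Bornology.IsBounded.subset
      (Metric.isBounded_closedBall (x := (0 : EuclideanSpace ℝ (Fin d))) (r := Real.sqrt d))
    intro m hm
    simp only [Metric.mem_closedBall, dist_zero_right]
    have hle : ∀ i, ‖m i‖ ≤ 1 := by
      intro i
      rw [Real.norm_eq_abs, abs_of_nonneg (hm.1 i)]
      calc m i ≤ ∑ j, m j := Finset.single_le_sum (fun j _ => hm.1 j) (Finset.mem_univ i)
        _ = 1 := hm.2
    calc ‖m‖ = Real.sqrt (∑ i, ‖m i‖ ^ 2) := EuclideanSpace.norm_eq m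
      _ ≤ Real.sqrt (∑ _i : Fin d, (1:ℝ)) := by
          apply Real.sqrt_le_sqrt
          exact Finset.sum_le_sum fun i _ => by
            have := hle i
            nlinarith [norm_nonneg (m i)]
      _ = Real.sqrt d := by simp
  exact Metric.isCompact_of_isClosed_isBounded hclosed hbdd

lemma simplex_nonempty (d : ℕ) (hd : 1 ≤ d) : (simplexSet d).Nonempty := by
  have i0 : Fin d := ⟨0, by omega⟩
  refine ⟨EuclideanSpace.single i0 1, fun i => ?_, ?_⟩
  · rw [EuclideanSpace.single_apply]
    split <;> norm_num
  · simp [EuclideanSpace.single_apply]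

lemma c1_facts (d : ℕ) (U : Set (ℝ × EuclideanSpace ℝ (Fin d))) (hU : IsOpen U)
    (h : ℝ → EuclideanSpace ℝ (Fin d) → ℝ)
    (hh : ContDiffOn ℝ 1 (fun p : ℝ × EuclideanSpace ℝ (Fin d) => h p.1 p.2) U) :
    ContinuousOn (fun p : ℝ × EuclideanSpace ℝ (Fin d) => h p.1 p.2) U ∧
    ContinuousOn (fun p : ℝ × EuclideanSpace ℝ (Fin d) => deriv (fun s => h s p.2) p.1) U ∧
    ContinuousOn (fun p : ℝ × EuclideanSpace ℝ (Fin d) => gradient (h p.1) p.2) U := by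
  set F : ℝ × EuclideanSpace ℝ (Fin d) → ℝ := fun p => h p.1 p.2 with hF
  have hFat : ∀ p ∈ U, HasFDerivAt F (fderiv ℝ F p) p := fun p hp =>
    ((hh.differentiableOn one_ne_zero).differentiableAt (hU.mem_nhds hp)).hasFDerivAt
  have hfc : ContinuousOn (fderiv ℝ F) U := hh.continuousOn_fderiv_of_isOpen hU le_rfl
  refine ⟨hh.continuousOn, ?_, ?_⟩
  · have hc1 : ContinuousOn
        (fun p => fderiv ℝ F p ((1:ℝ), (0 : EuclideanSpace ℝ (Fin d)))) U :=
      hfc.clm_apply continuousOn_const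
    apply hc1.congr
    rintro ⟨t, m⟩ hp
    have h1 : HasDerivAt (fun s : ℝ => (s, m)) ((1:ℝ), (0 : EuclideanSpace ℝ (Fin d))) t :=
      (hasDerivAt_id t).prodMk (hasDerivAt_const t m)
    exact ((hFat (t, m) hp).comp_hasDerivAt t h1).deriv
  · have hc2 : ContinuousOn (fun p =>
        (InnerProductSpace.toDual ℝ (EuclideanSpace ℝ (Fin d))).symm
          ((fderiv ℝ F p).comp
            (ContinuousLinearMap.inr ℝ ℝ (EuclideanSpace ℝ (Fin d))))) U :=
      (InnerProductSpace.toDual ℝ (EuclideanSpace ℝ (Fin d))).symm.continuous.comp_continuousOn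
        (hfc.clm_comp continuousOn_const)
    apply hc2.congr
    rintro ⟨t, m⟩ hp
    have h3 : HasFDerivAt (h t)
        ((fderiv ℝ F (t, m)).comp (ContinuousLinearMap.inr ℝ ℝ (EuclideanSpace ℝ (Fin d)))) m :=
      (hFat (t, m) hp).comp m (hasFDerivAt_prodMk_right t m)
    show gradient (h t) m = _
    unfold gradient
    rw [h3.fderiv]

lemma Dvec_sub_bound (d : ℕ) (V ψ : ℝ → EuclideanSpace ℝ (Fin d) → ℝ) (i : Fin d) (t : ℝ)
    (m : EuclideanSpace ℝ (Fin d)) :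
    ‖Dvec d ψ i t m - Dvec d V i t m‖ ≤
      Real.sqrt 2 * Real.sqrt d * ‖gradient (ψ t) m - gradient (V t) m‖ := by
  set Δ := gradient (ψ t) m - gradient (V t) m with hΔ
  have hg : ∀ (h : ℝ → EuclideanSpace ℝ (Fin d) → ℝ) (v : EuclideanSpace ℝ (Fin d)),
      ⟪gradient (h t) m, v⟫ = fderiv ℝ (h t) m v := by
    intro h v
    unfold gradient
    exact InnerProductSpace.toDual_symm_apply
  have hentry : ∀ j, (Dvec d ψ i t m - Dvec d V i t m) j = ⟪Δ, eVec d j - eVec d i⟫ := by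
    intro j
    have : (Dvec d ψ i t m - Dvec d V i t m) j
        = fderiv ℝ (ψ t) m (eVec d j - eVec d i) - fderiv ℝ (V t) m (eVec d j - eVec d i) := rfl
    rw [this, hΔ, inner_sub_left, hg, hg]
  have hdir : ∀ j, ‖eVec d j - eVec d i‖ ≤ Real.sqrt 2 := by
    intro j
    have hinner : (0:ℝ) ≤ ⟪eVec d j, eVec d i⟫ := by
      rw [eVec, eVec, EuclideanSpace.inner_single_left]
      simp only [map_one, one_mul, EuclideanSpace.single_apply]
      split <;> norm_num
    have hnj : ‖eVec d j‖ = 1 := by simp [eVec, EuclideanSpace.norm_single]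
    have hni : ‖eVec d i‖ = 1 := by simp [eVec, EuclideanSpace.norm_single]
    have h1 : ‖eVec d j - eVec d i‖ ^ 2 ≤ 2 := by
      rw [norm_sub_sq_real, hnj, hni]; nlinarith
    calc ‖eVec d j - eVec d i‖ = Real.sqrt (‖eVec d j - eVec d i‖ ^ 2) :=
          (Real.sqrt_sq (norm_nonneg _)).symm
      _ ≤ Real.sqrt 2 := Real.sqrt_le_sqrt h1
  have habs : ∀ j, ‖(Dvec d ψ i t m - Dvec d V i t m) j‖ ≤ Real.sqrt 2 * ‖Δ‖ := by
    intro j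
    rw [hentry j, Real.norm_eq_abs]
    calc |⟪Δ, eVec d j - eVec d i⟫| ≤ ‖Δ‖ * ‖eVec d j - eVec d i‖ :=
          abs_real_inner_le_norm _ _
      _ ≤ ‖Δ‖ * Real.sqrt 2 := mul_le_mul_of_nonneg_left (hdir j) (norm_nonneg _)
      _ = Real.sqrt 2 * ‖Δ‖ := mul_comm _ _
  calc ‖Dvec d ψ i t m - Dvec d V i t m‖
      = Real.sqrt (∑ j, ‖(Dvec d ψ i t m - Dvec d V i t m) j‖ ^ 2) :=
        EuclideanSpace.norm_eq _
    _ ≤ Real.sqrt (∑ _j : Fin d, (Real.sqrt 2 * ‖Δ‖) ^ 2) := by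
        apply Real.sqrt_le_sqrt
        exact Finset.sum_le_sum fun j _ => pow_le_pow_left₀ (norm_nonneg _) (habs j) 2
    _ = Real.sqrt ((d : ℝ) * (Real.sqrt 2 * ‖Δ‖) ^ 2) := by
        rw [Finset.sum_const, Finset.card_univ, Fintype.card_fin, nsmul_eq_mul]
    _ = Real.sqrt d * (Real.sqrt 2 * ‖Δ‖) := by
        rw [Real.sqrt_mul (Nat.cast_nonneg d), Real.sqrt_sq (by positivity)]
    _ = Real.sqrt 2 * Real.sqrt d * ‖Δ‖ := by ring

set_option maxHeartbeats 1000000 in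
/-- if `V` is a classical solution of the HJB equation, each `H^i` is
`C`-Lipschitz in `z`, and `φ` is `C¹` near `[0,T] × S_d` with
`sup|V-φ| + sup|∂_tV - ∂_tφ| + sup‖∇_mV - ∇_mφ‖ < ε`, then
`L(φ) ≤ (√2 · C · d^{3/2} + 2) ε`. -/
theorem dgm_loss_bound (d : ℕ) (hd : 2 ≤ d) (T : ℝ) (hT : 0 < T) (C : ℝ) (hC : 0 < C)
    (H : Fin d → ℝ → EuclideanSpace ℝ (Fin d) → EuclideanSpace ℝ (Fin d) → ℝ)
    (hH : ∀ i : Fin d, ∀ t ∈ Set.Icc (0:ℝ) T, ∀ m ∈ simplexSet d,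
      ∀ z z' : EuclideanSpace ℝ (Fin d), |H i t m z - H i t m z'| ≤ C * ‖z - z'‖)
    (g : Fin d → EuclideanSpace ℝ (Fin d) → ℝ)
    (V : ℝ → EuclideanSpace ℝ (Fin d) → ℝ) (hV : C1OnNbhd d T V)
    (hVpde : ∀ t ∈ Set.Icc (0:ℝ) T, ∀ m ∈ simplexSet d, HJBop d H V t m = 0)
    (hVterm : ∀ m ∈ simplexSet d, V T m = ∑ i, m i * g i m)
    (φ : ℝ → EuclideanSpace ℝ (Fin d) → ℝ) (hφ : C1OnNbhd d T φ) (ε : ℝ)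
    (happrox :
      sSup ((fun p : ℝ × EuclideanSpace ℝ (Fin d) => |V p.1 p.2 - φ p.1 p.2|) ''
          (Set.Icc (0:ℝ) T ×ˢ simplexSet d)) +
      sSup ((fun p : ℝ × EuclideanSpace ℝ (Fin d) =>
          |deriv (fun s => V s p.2) p.1 - deriv (fun s => φ s p.2) p.1|) ''
          (Set.Icc (0:ℝ) T ×ˢ simplexSet d)) +
      sSup ((fun p : ℝ × EuclideanSpace ℝ (Fin d) =>
          ‖gradient (V p.1) p.2 - gradient (φ p.1) p.2‖) ''
          (Set.Icc (0:ℝ) T ×ˢ simplexSet d)) < ε) :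
    DGMloss d T H g φ ≤ (Real.sqrt 2 * C * (d : ℝ) ^ ((3:ℝ)/2) + 2) * ε := by
  classical
  obtain ⟨UV, hUVo, hKUV, hVsm⟩ := hV
  obtain ⟨Uφ, hUφo, hKUφ, hφsm⟩ := hφ
  obtain ⟨cV0, cV1, cV2⟩ := c1_facts d UV hUVo V hVsm
  obtain ⟨cφ0, cφ1, cφ2⟩ := c1_facts d Uφ hUφo φ hφsm
  set K : Set (ℝ × EuclideanSpace ℝ (Fin d)) := Set.Icc (0:ℝ) T ×ˢ simplexSet d with hKdef
  have hKc : IsCompact K := isCompact_Icc.prod (simplex_isCompact d)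
  obtain ⟨m0, hm0⟩ := simplex_nonempty d (by omega)
  have hp0 : ((T, m0) : ℝ × EuclideanSpace ℝ (Fin d)) ∈ K := ⟨⟨hT.le, le_refl T⟩, hm0⟩
  have hbdd0 : BddAbove ((fun p : ℝ × EuclideanSpace ℝ (Fin d) =>
      |V p.1 p.2 - φ p.1 p.2|) '' K) :=
    (hKc.image_of_continuousOn (((cV0.mono hKUV).sub (cφ0.mono hKUφ)).abs)).bddAbove
  have hbdd1 : BddAbove ((fun p : ℝ × EuclideanSpace ℝ (Fin d) =>
      |deriv (fun s => V s p.2) p.1 - deriv (fun s => φ s p.2) p.1|) '' K) :=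
    (hKc.image_of_continuousOn (((cV1.mono hKUV).sub (cφ1.mono hKUφ)).abs)).bddAbove
  have hbdd2 : BddAbove ((fun p : ℝ × EuclideanSpace ℝ (Fin d) =>
      ‖gradient (V p.1) p.2 - gradient (φ p.1) p.2‖) '' K) :=
    (hKc.image_of_continuousOn (((cV2.mono hKUV).sub (cφ2.mono hKUφ)).norm)).bddAbove
  set s0 := sSup ((fun p : ℝ × EuclideanSpace ℝ (Fin d) =>
      |V p.1 p.2 - φ p.1 p.2|) '' K) with hs0def
  set s1 := sSup ((fun p : ℝ × EuclideanSpace ℝ (Fin d) =>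
      |deriv (fun s => V s p.2) p.1 - deriv (fun s => φ s p.2) p.1|) '' K) with hs1def
  set s2 := sSup ((fun p : ℝ × EuclideanSpace ℝ (Fin d) =>
      ‖gradient (V p.1) p.2 - gradient (φ p.1) p.2‖) '' K) with hs2def
  have hs0nn : 0 ≤ s0 := le_trans (abs_nonneg _) (le_csSup hbdd0 ⟨(T, m0), hp0, rfl⟩)
  have hs1nn : 0 ≤ s1 := le_trans (abs_nonneg _) (le_csSup hbdd1 ⟨(T, m0), hp0, rfl⟩)
  have hs2nn : 0 ≤ s2 := le_trans (norm_nonneg _) (le_csSup hbdd2 ⟨(T, m0), hp0, rfl⟩)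
  have hsum : s0 + s1 + s2 ≤ ε := happrox.le
  -- pointwise bound on the PDE residual
  have hptA : ∀ p ∈ K, |HJBop d H φ p.1 p.2| ≤ s1 + Real.sqrt 2 * C * Real.sqrt d * s2 := by
    rintro ⟨t, m⟩ ⟨ht, hm⟩
    have hmemtm : ((t, m) : ℝ × EuclideanSpace ℝ (Fin d)) ∈ K := ⟨ht, hm⟩
    have hf1le : |deriv (fun s => V s m) t - deriv (fun s => φ s m) t| ≤ s1 :=
      le_csSup hbdd1 ⟨(t, m), hmemtm, rfl⟩
    have hf2le : ‖gradient (V t) m - gradient (φ t) m‖ ≤ s2 :=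
      le_csSup hbdd2 ⟨(t, m), hmemtm, rfl⟩
    have hzero := hVpde t ht m hm
    have hsplit : HJBop d H φ t m - HJBop d H V t m =
        (deriv (fun s => V s m) t - deriv (fun s => φ s m) t)
        + ∑ i, m i * (H i t m (Dvec d φ i t m) - H i t m (Dvec d V i t m)) := by
      simp only [HJBop, mul_sub, Finset.sum_sub_distrib]
      ring
    have hterm : ∀ i : Fin d, |H i t m (Dvec d φ i t m) - H i t m (Dvec d V i t m)| ≤
        C * (Real.sqrt 2 * Real.sqrt d * ‖gradient (V t) m - gradient (φ t) m‖) := by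
      intro i
      calc |H i t m (Dvec d φ i t m) - H i t m (Dvec d V i t m)|
          ≤ C * ‖Dvec d φ i t m - Dvec d V i t m‖ := hH i t ht m hm _ _
        _ ≤ C * (Real.sqrt 2 * Real.sqrt d * ‖gradient (V t) m - gradient (φ t) m‖) := by
            rw [norm_sub_rev (gradient (V t) m)]
            exact mul_le_mul_of_nonneg_left (Dvec_sub_bound d V φ i t m) hC.le
    have hsum' : |∑ i, m i * (H i t m (Dvec d φ i t m) - H i t m (Dvec d V i t m))|
        ≤ C * (Real.sqrt 2 * Real.sqrt d * ‖gradient (V t) m - gradient (φ t) m‖) := by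
      calc |∑ i, m i * (H i t m (Dvec d φ i t m) - H i t m (Dvec d V i t m))|
          ≤ ∑ i, |m i * (H i t m (Dvec d φ i t m) - H i t m (Dvec d V i t m))| :=
            Finset.abs_sum_le_sum_abs _ _
        _ = ∑ i, m i * |H i t m (Dvec d φ i t m) - H i t m (Dvec d V i t m)| := by
            refine Finset.sum_congr rfl fun i _ => ?_
            rw [abs_mul, abs_of_nonneg (hm.1 i)]
        _ ≤ ∑ i, m i * (C * (Real.sqrt 2 * Real.sqrt d *
              ‖gradient (V t) m - gradient (φ t) m‖)) :=
            Finset.sum_le_sum fun i _ => mul_le_mul_of_nonneg_left (hterm i) (hm.1 i)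
        _ = (∑ i, m i) * (C * (Real.sqrt 2 * Real.sqrt d *
              ‖gradient (V t) m - gradient (φ t) m‖)) := by rw [← Finset.sum_mul]
        _ = C * (Real.sqrt 2 * Real.sqrt d * ‖gradient (V t) m - gradient (φ t) m‖) := by
            rw [hm.2, one_mul]
    calc |HJBop d H φ t m| = |HJBop d H φ t m - HJBop d H V t m| := by rw [hzero, sub_zero]
      _ ≤ |deriv (fun s => V s m) t - deriv (fun s => φ s m) t|
          + |∑ i, m i * (H i t m (Dvec d φ i t m) - H i t m (Dvec d V i t m))| := by
            rw [hsplit]; exact abs_add_le _ _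
      _ ≤ s1 + Real.sqrt 2 * C * Real.sqrt d * s2 := by
          refine add_le_add hf1le ?_
          refine le_trans hsum' ?_
          have h2 : ‖gradient (V t) m - gradient (φ t) m‖ ≤ s2 := hf2le
          nlinarith [Real.sqrt_nonneg 2, Real.sqrt_nonneg (d:ℝ), hC.le,
            mul_le_mul_of_nonneg_left h2
              (by positivity : (0:ℝ) ≤ C * (Real.sqrt 2 * Real.sqrt d))]
  have hptB : ∀ m ∈ simplexSet d, |φ T m - ∑ i, m i * g i m| ≤ s0 := by
    intro m hm
    have heq : |φ T m - ∑ i, m i * g i m| = |V T m - φ T m| := by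
      rw [← hVterm m hm, abs_sub_comm]
    rw [heq]
    have hmemTm : ((T, m) : ℝ × EuclideanSpace ℝ (Fin d)) ∈ K := ⟨⟨hT.le, le_refl T⟩, hm⟩
    exact le_csSup hbdd0 ⟨(T, m), hmemTm, rfl⟩
  have hA : sSup ((fun p : ℝ × EuclideanSpace ℝ (Fin d) => |HJBop d H φ p.1 p.2|) '' K)
      ≤ s1 + Real.sqrt 2 * C * Real.sqrt d * s2 := by
    refine Real.sSup_le ?_ (by positivity)
    rintro x ⟨p, hp, rfl⟩
    exact hptA p hp
  have hB : sSup ((fun m => |φ T m - ∑ i, m i * g i m|) '' simplexSet d) ≤ s0 := by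
    refine Real.sSup_le ?_ hs0nn
    rintro x ⟨m, hm, rfl⟩
    exact hptB m hm
  have hc' : Real.sqrt 2 * C * Real.sqrt d ≤ Real.sqrt 2 * C * (d : ℝ) ^ ((3:ℝ)/2) := by
    rw [show Real.sqrt (d:ℝ) = (d:ℝ) ^ ((1:ℝ)/2) from Real.sqrt_eq_rpow _]
    refine mul_le_mul_of_nonneg_left ?_ (by positivity)
    have hd1 : (1:ℝ) ≤ (d:ℝ) := by exact_mod_cast (by omega : 1 ≤ d)
    exact Real.rpow_le_rpow_of_exponent_le hd1 (by norm_num)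
  have hcnn : 0 ≤ Real.sqrt 2 * C * (d : ℝ) ^ ((3:ℝ)/2) := by positivity
  unfold DGMloss
  rw [← hKdef]
  set c := Real.sqrt 2 * C * (d : ℝ) ^ ((3:ℝ)/2) with hcdef
  nlinarith [hA, hB, hs0nn, hs1nn, hs2nn, hsum,
    mul_le_mul_of_nonneg_right hc' hs2nn,
    mul_nonneg hcnn (sub_nonneg.2 hsum),
    mul_nonneg hcnn hs0nn, mul_nonneg hcnn hs1nn, mul_nonneg hcnn hs2nn]
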